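/- arXiv:1102.0649 — 5 statements merged into one kernel-verified Lean document; each statement's English description precedes it below -/
import Mathlib

section
/- There exists a constant B_p > 0 (one may take B_p = q/(q-1) + 1 where 1/p + 1/q = 1) such that for all h in W_0^{1,p}(0,1)^d with 1 < p < ∞, ‖h'‖_{L^p} ≤ B_p · ‖h'(·) − h(·)/s‖_{L^p}. -/
/-! With `u s = s⁻¹ • h s` and `g = h' - u` one has `u' = s⁻¹ • g` and `u 1 = 0`. Integrating
`(s ‖u s‖ ^ p)' ≥ ‖u s‖ ^ p - p ‖u s‖ ^ (p - 1) ‖g s‖` over `[a, 1]` and applying Hölder's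
inequality gives the dual Hardy inequality `‖u‖_p ≤ p ‖g‖_p` on `(a, 1]`, where `u` is bounded so
that the factor `‖u‖_p ^ (p - 1)` can be cancelled; monotone convergence extends it to `(0, 1]`.
Minkowski's inequality for `h' = g + u` then gives the constant `p + 1 = q / (q - 1) + 1`. -/

open MeasureTheory Set Filter

open scoped ENNReal

section Lp

variable {α E : Type*} [MeasurableSpace α] {μ : Measure α} [NormedAddCommGroup E] {p q : ℝ}

lemma memLp_ofReal_iff_integrable_norm_rpow (hp : 0 < p) {f : α → E}
    (hf : AEStronglyMeasurable f μ) :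
    MemLp f (ENNReal.ofReal p) μ ↔ Integrable (fun x => ‖f x‖ ^ p) μ := by
  rw [← integrable_norm_rpow_iff hf (by simpa using hp) ENNReal.ofReal_ne_top,
    ENNReal.toReal_ofReal hp.le]

lemma MeasureTheory.MemLp.norm_rpow_sub_one (hpq : p.HolderConjugate q) {f : α → E}
    (hf : MemLp f (ENNReal.ofReal p) μ) :
    MemLp (fun x => ‖f x‖ ^ (p - 1)) (ENNReal.ofReal q) μ := by
  have h := (memLp_norm_rpow_iff hf.1 (ENNReal.ofReal_pos.2 hpq.sub_one_pos).ne'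
    ENNReal.ofReal_ne_top).2 hf
  rwa [ENNReal.toReal_ofReal hpq.sub_one_pos.le, ← ENNReal.ofReal_div_of_pos hpq.sub_one_pos,
    ← hpq.conjugate_eq] at h

lemma integral_norm_rpow_sub_one_mul_norm_le (hpq : p.HolderConjugate q) {F : Type*}
    [NormedAddCommGroup F] {f : α → E} {φ : α → F}
    (hf : MemLp f (ENNReal.ofReal p) μ) (hφ : MemLp φ (ENNReal.ofReal p) μ) :
    ∫ x, ‖f x‖ ^ (p - 1) * ‖φ x‖ ∂μ ≤
      (∫ x, ‖f x‖ ^ p ∂μ) ^ (1 / q) * (∫ x, ‖φ x‖ ^ p ∂μ) ^ (1 / p) := by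
  have key := integral_mul_le_Lp_mul_Lq_of_nonneg hpq.symm
    (ae_of_all _ fun _ => Real.rpow_nonneg (norm_nonneg _) _) (ae_of_all _ fun _ => norm_nonneg _)
    (hf.norm_rpow_sub_one hpq) hφ.norm
  have hexp : ∀ x, (‖f x‖ ^ (p - 1)) ^ q = ‖f x‖ ^ p := fun x => by
    rw [← Real.rpow_mul (norm_nonneg _), hpq.sub_one_mul_conj]
  simpa only [hexp] using key

lemma integrable_norm_rpow_sub_one_mul_norm (hpq : p.HolderConjugate q) {F : Type*}
    [NormedAddCommGroup F] {f : α → E} {φ : α → F}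
    (hf : MemLp f (ENNReal.ofReal p) μ) (hφ : MemLp φ (ENNReal.ofReal p) μ) :
    Integrable (fun x => ‖f x‖ ^ (p - 1) * ‖φ x‖) μ :=
  haveI := hpq.symm.ennrealOfReal
  (hf.norm_rpow_sub_one hpq).integrable_mul hφ.norm

lemma integral_norm_add_rpow_le (hp : 1 ≤ p) {f g : α → E}
    (hf : MemLp f (ENNReal.ofReal p) μ) (hg : MemLp g (ENNReal.ofReal p) μ) :
    (∫ x, ‖f x + g x‖ ^ p ∂μ) ^ (1 / p) ≤
      (∫ x, ‖f x‖ ^ p ∂μ) ^ (1 / p) + (∫ x, ‖g x‖ ^ p ∂μ) ^ (1 / p) := by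
  have hp0 : ENNReal.ofReal p ≠ 0 := by simpa using zero_lt_one.trans_le hp
  have hnorm : ∀ {k : α → E}, MemLp k (ENNReal.ofReal p) μ →
      eLpNorm k (ENNReal.ofReal p) μ = ENNReal.ofReal ((∫ x, ‖k x‖ ^ p ∂μ) ^ (1 / p)) := by
    intro k hk
    rw [hk.eLpNorm_eq_integral_rpow_norm hp0 ENNReal.ofReal_ne_top,
      ENNReal.toReal_ofReal (zero_le_one.trans hp), one_div]
  have h := eLpNorm_add_le hf.1 hg.1 (ENNReal.one_le_ofReal.2 hp)
  rw [hnorm (hf.add hg), hnorm hf, hnorm hg, ← ENNReal.ofReal_add (by positivity)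
    (by positivity)] at h
  exact (ENNReal.ofReal_le_ofReal_iff (by positivity)).1 h

lemma ContinuousOn.memLp_Ioc {u : ℝ → E} {a b : ℝ} (hu : ContinuousOn u (Icc a b)) (p : ℝ≥0∞) :
    MemLp u p (volume.restrict (Ioc a b)) := by
  obtain ⟨C, hC⟩ := isCompact_Icc.exists_bound_of_continuousOn hu
  exact .of_bound ((hu.mono Ioc_subset_Icc_self).aestronglyMeasurable measurableSet_Ioc) C
    (ae_restrict_of_forall_mem measurableSet_Ioc fun x hx => hC x (Ioc_subset_Icc_self hx))

end Lp

lemma Real.rpow_one_div_le_of_le_rpow_one_div_mul {p q A C : ℝ} (hpq : p.HolderConjugate q)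
    (hA : 0 ≤ A) (hC : 0 ≤ C) (h : A ≤ A ^ (1 / q) * C) : A ^ (1 / p) ≤ C := by
  rcases hA.eq_or_lt with rfl | hA
  · rwa [Real.zero_rpow hpq.one_div_ne_zero]
  have hsplit : A ^ (1 / p) * A ^ (1 / q) = A := by
    rw [← Real.rpow_add hA, one_div, one_div, hpq.inv_add_inv_eq_one, Real.rpow_one]
  have h' : A ^ (1 / p) * A ^ (1 / q) ≤ C * A ^ (1 / q) := by rwa [hsplit, mul_comm C]
  exact le_of_mul_le_mul_right h' (Real.rpow_pos_of_pos hA _)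

lemma integrableOn_Ioc_zero_and_setIntegral_le {f : ℝ → ℝ} {b C : ℝ} (hf0 : ∀ x, 0 ≤ f x)
    (hf : ∀ a, 0 < a → IntegrableOn f (Ioc a b)) (hC : ∀ a, 0 < a → ∫ x in Ioc a b, f x ≤ C) :
    IntegrableOn f (Ioc 0 b) ∧ ∫ x in Ioc 0 b, f x ≤ C := by
  set a : ℕ → ℝ := fun n => 1 / (n + 1)
  have ha : ∀ n, 0 < a n := fun n => by positivity
  have hunion : ⋃ n, Ioc (a n) b = Ioc 0 b := by
    ext x
    simp only [mem_iUnion, mem_Ioc]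
    refine ⟨fun ⟨n, hn⟩ => ⟨(ha n).trans hn.1, hn.2⟩, fun hx => ?_⟩
    obtain ⟨n, hn⟩ := exists_nat_one_div_lt hx.1
    exact ⟨n, hn, hx.2⟩
  have hmono : Monotone fun n => Ioc (a n) b := fun m n hmn =>
    Ioc_subset_Ioc_left (Nat.one_div_le_one_div hmn)
  have hint : IntegrableOn f (Ioc 0 b) :=
    integrableOn_Ioc_of_intervalIntegral_norm_bounded_left (fun n => hf _ (ha n))
      tendsto_one_div_add_atTop_nhds_zero_nat
      (Eventually.of_forall fun n => by simpa only [Real.norm_of_nonneg (hf0 _)] using hC _ (ha n))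
  have hlim := tendsto_setIntegral_of_monotone (μ := volume) (fun _ => measurableSet_Ioc) hmono
    (hunion ▸ hint)
  rw [hunion] at hlim
  exact ⟨hint, le_of_tendsto' hlim fun n => hC _ (ha n)⟩

lemma HasDerivAt.inv_smul {E : Type*} [NormedAddCommGroup E] [NormedSpace ℝ E] {h : ℝ → E}
    {v : E} {s : ℝ} (hh : HasDerivAt h v s) (hs : s ≠ 0) :
    HasDerivAt (fun t => t⁻¹ • h t) (s⁻¹ • (v - s⁻¹ • h s)) s := by
  refine ((hasDerivAt_inv hs).smul hh).congr_deriv ?_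
  rw [smul_sub, smul_smul, sq, mul_inv]
  module

section InnerProductSpace

variable {E : Type*} [NormedAddCommGroup E] [InnerProductSpace ℝ E]

lemma HasDerivAt.exists_hasDerivAt_norm_rpow {u : ℝ → E} {v : E} {s p : ℝ}
    (hu : HasDerivAt u v s) (hp : 1 < p) :
    ∃ r', HasDerivAt (fun t => ‖u t‖ ^ p) r' s ∧ |r'| ≤ p * ‖u s‖ ^ (p - 1) * ‖v‖ := by
  refine ⟨fderiv ℝ (fun x : E => ‖x‖ ^ p) (u s) v,
    ((differentiable_norm_rpow hp) (u s)).hasFDerivAt.comp_hasDerivAt s hu, ?_⟩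
  rw [← Real.norm_eq_abs, ← norm_fderiv_norm_id_rpow (u s) hp]
  exact ContinuousLinearMap.le_opNorm _ _

variable {u g : ℝ → E} {a b p q : ℝ}

lemma setIntegral_norm_rpow_le_mul_setIntegral_of_hasDerivAt_inv_smul (hpq : p.HolderConjugate q)
    (ha : 0 ≤ a) (hab : a ≤ b) (hu_cont : ContinuousOn u (Icc a b))
    (hu : ∀ s ∈ Ioo a b, HasDerivAt u (s⁻¹ • g s) s) (hub : u b = 0)
    (hg : MemLp g (ENNReal.ofReal p) (volume.restrict (Ioc a b))) :
    ∫ s in Ioc a b, ‖u s‖ ^ p ≤ p * ∫ s in Ioc a b, ‖u s‖ ^ (p - 1) * ‖g s‖ := by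
  choose! r' hr' hr'_le using fun s (hs : s ∈ Ioo a b) =>
    (hu s hs).exists_hasDerivAt_norm_rpow hpq.lt
  have hr_cont : ContinuousOn (fun t => ‖u t‖ ^ p) (Icc a b) :=
    hu_cont.norm.rpow_const fun _ _ => Or.inr hpq.nonneg
  have hr_int : IntegrableOn (fun t => ‖u t‖ ^ p) (Ioc a b) :=
    hr_cont.integrableOn_Icc.mono_set Ioc_subset_Icc_self
  have hprod := integrable_norm_rpow_sub_one_mul_norm hpq (hu_cont.memLp_Ioc _) hg
  have hφ : IntegrableOn (fun s => ‖u s‖ ^ p - p * (‖u s‖ ^ (p - 1) * ‖g s‖)) (Icc a b) :=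
    (integrableOn_Icc_iff_integrableOn_Ioc).2 (hr_int.sub (hprod.const_mul p))
  -- `‖u‖ ^ p - p ‖u‖ ^ (p - 1) ‖g‖` is a lower bound for the derivative of `t ‖u t‖ ^ p`
  have hibp := intervalIntegral.integral_le_sub_of_hasDeriv_right_of_le
    (g := fun t => t * ‖u t‖ ^ p) hab (continuousOn_id.mul hr_cont)
    (fun s hs => ((hasDerivAt_id s).mul (hr' s hs)).hasDerivWithinAt) hφ fun s hs => ?_
  · rw [intervalIntegral.integral_of_le hab, integral_sub hr_int (hprod.const_mul p),
      integral_const_mul] at hibp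
    have : 0 ≤ a * ‖u a‖ ^ p := by positivity
    simp only [hub, norm_zero, Real.zero_rpow hpq.ne_zero, mul_zero] at hibp
    linarith
  · have hs0 : 0 < s := ha.trans_lt hs.1
    have hbound : |s * r' s| ≤ p * (‖u s‖ ^ (p - 1) * ‖g s‖) := by
      rw [abs_mul, abs_of_pos hs0]
      calc s * |r' s| ≤ s * (p * ‖u s‖ ^ (p - 1) * ‖s⁻¹ • g s‖) := by gcongr; exact hr'_le s hs
        _ = p * (‖u s‖ ^ (p - 1) * ‖g s‖) := by
          rw [norm_smul, Real.norm_of_nonneg (inv_nonneg.2 hs0.le)]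
          field_simp
    simp only [id, one_mul]
    linarith [neg_abs_le (s * r' s)]

lemma setIntegral_Ioc_norm_rpow_le_of_hasDerivAt_inv_smul (hpq : p.HolderConjugate q)
    (ha : 0 ≤ a) (hab : a ≤ b) (hu_cont : ContinuousOn u (Icc a b))
    (hu : ∀ s ∈ Ioo a b, HasDerivAt u (s⁻¹ • g s) s) (hub : u b = 0)
    (hg : MemLp g (ENNReal.ofReal p) (volume.restrict (Ioc a b))) :
    ∫ s in Ioc a b, ‖u s‖ ^ p ≤ p ^ p * ∫ s in Ioc a b, ‖g s‖ ^ p := by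
  have hp := hpq.nonneg
  set A := ∫ s in Ioc a b, ‖u s‖ ^ p
  set G := ∫ s in Ioc a b, ‖g s‖ ^ p
  have hA : 0 ≤ A := setIntegral_nonneg measurableSet_Ioc fun _ _ => by positivity
  have hG : 0 ≤ G := setIntegral_nonneg measurableSet_Ioc fun _ _ => by positivity
  have hAG : A ≤ A ^ (1 / q) * (p * G ^ (1 / p)) :=
    calc A ≤ p * ∫ s in Ioc a b, ‖u s‖ ^ (p - 1) * ‖g s‖ :=
          setIntegral_norm_rpow_le_mul_setIntegral_of_hasDerivAt_inv_smul hpq ha hab hu_cont hu hub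
            hg
      _ ≤ p * (A ^ (1 / q) * G ^ (1 / p)) := by
          gcongr
          exact integral_norm_rpow_sub_one_mul_norm_le hpq (hu_cont.memLp_Ioc _) hg
      _ = A ^ (1 / q) * (p * G ^ (1 / p)) := by ring
  have h := Real.rpow_le_rpow (by positivity) (Real.rpow_one_div_le_of_le_rpow_one_div_mul hpq hA
    (by positivity) hAG) hp
  rwa [← Real.rpow_mul hA, Real.mul_rpow hp (by positivity), ← Real.rpow_mul hG,
    one_div_mul_cancel hpq.ne_zero, Real.rpow_one, Real.rpow_one] at h

theorem memLp_and_setIntegral_norm_rpow_le_of_hasDerivAt_inv_smul (hpq : p.HolderConjugate q)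
    (hu : ∀ s ∈ Ioc 0 b, HasDerivAt u (s⁻¹ • g s) s) (hub : u b = 0)
    (hg : MemLp g (ENNReal.ofReal p) (volume.restrict (Ioc 0 b))) :
    MemLp u (ENNReal.ofReal p) (volume.restrict (Ioc 0 b)) ∧
      ∫ s in Ioc 0 b, ‖u s‖ ^ p ≤ p ^ p * ∫ s in Ioc 0 b, ‖g s‖ ^ p := by
  have hp := hpq.pos
  have hu_cont : ContinuousOn u (Ioc 0 b) := fun s hs =>
    (hu s hs).continuousAt.continuousWithinAt
  have htrunc : ∀ a, 0 < a → IntegrableOn (fun s => ‖u s‖ ^ p) (Ioc a b) ∧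
      ∫ s in Ioc a b, ‖u s‖ ^ p ≤ p ^ p * ∫ s in Ioc 0 b, ‖g s‖ ^ p := by
    intro a ha
    rcases le_or_gt a b with hab | hba
    · have hsub : Icc a b ⊆ Ioc 0 b := Icc_subset_Ioc_iff hab |>.2 ⟨ha, le_rfl⟩
      have hu_cont' : ContinuousOn u (Icc a b) := hu_cont.mono hsub
      have hu_memLp := hu_cont'.memLp_Ioc (ENNReal.ofReal p)
      refine ⟨(memLp_ofReal_iff_integrable_norm_rpow hp hu_memLp.1).1 hu_memLp, ?_⟩
      calc ∫ s in Ioc a b, ‖u s‖ ^ p ≤ p ^ p * ∫ s in Ioc a b, ‖g s‖ ^ p :=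
              setIntegral_Ioc_norm_rpow_le_of_hasDerivAt_inv_smul hpq ha.le hab hu_cont'
                (fun s hs => hu s (hsub (Ioo_subset_Icc_self hs))) hub
                (hg.mono_measure (Measure.restrict_mono (Ioc_subset_Ioc_left ha.le) le_rfl))
          _ ≤ p ^ p * ∫ s in Ioc 0 b, ‖g s‖ ^ p := by
              refine mul_le_mul_of_nonneg_left (setIntegral_mono_set ?_ ?_ ?_) (by positivity)
              · exact (memLp_ofReal_iff_integrable_norm_rpow hp hg.1).1 hg
              · exact ae_of_all _ fun _ => by positivity
              · exact (Ioc_subset_Ioc_left ha.le).eventuallyLE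
    · simp only [Ioc_eq_empty_of_le hba.le, integrableOn_empty, Measure.restrict_empty,
        integral_zero_measure, true_and]
      positivity
  obtain ⟨hint, hle⟩ := integrableOn_Ioc_zero_and_setIntegral_le (fun _ => by positivity)
    (fun a ha => (htrunc a ha).1) (fun a ha => (htrunc a ha).2)
  exact ⟨(memLp_ofReal_iff_integrable_norm_rpow hp
    (hu_cont.aestronglyMeasurable measurableSet_Ioc)).2 hint, hle⟩

end InnerProductSpace

theorem stmt_3_general (d : ℕ) (p q : ℝ) (hp : 1 < p)
    (hpq : 1 / p + 1 / q = 1)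
    (h h' : ℝ → EuclideanSpace ℝ (Fin d))
    (hderiv : ∀ s ∈ Set.Icc (0:ℝ) 1, HasDerivAt h (h' s) s)
    (h1 : h 1 = 0)
    (hint' : IntervalIntegrable (fun s => ‖h' s - s⁻¹ • h s‖ ^ p) volume 0 1) :
    (∫ s in (0:ℝ)..1, ‖h' s‖ ^ p) ^ (1 / p) ≤
      (q / (q - 1) + 1) * (∫ s in (0:ℝ)..1, ‖h' s - s⁻¹ • h s‖ ^ p) ^ (1 / p) := by
  have hconj : p.HolderConjugate q :=
    Real.holderConjugate_iff.2 ⟨hp, by simpa only [one_div] using hpq⟩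
  have hp0 := hconj.pos
  set g := fun s => h' s - s⁻¹ • h s
  have hu : ∀ s ∈ Ioc (0:ℝ) 1, HasDerivAt (fun t => t⁻¹ • h t) (s⁻¹ • g s) s := fun s hs =>
    (hderiv s (Ioc_subset_Icc_self hs)).inv_smul hs.1.ne'
  have hh'_meas : AEStronglyMeasurable h' (volume.restrict (Ioc 0 1)) :=
    (measurable_deriv h).aestronglyMeasurable.congr <| ae_restrict_of_forall_mem measurableSet_Ioc
      fun s hs => (hderiv s (Ioc_subset_Icc_self hs)).deriv
  have hu_meas : AEStronglyMeasurable (fun t => t⁻¹ • h t) (volume.restrict (Ioc 0 1)) :=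
    ContinuousOn.aestronglyMeasurable (fun s hs => (hu s hs).continuousAt.continuousWithinAt)
      measurableSet_Ioc
  have hg : MemLp g (ENNReal.ofReal p) (volume.restrict (Ioc 0 1)) :=
    (memLp_ofReal_iff_integrable_norm_rpow hp0 (hh'_meas.sub hu_meas)).2 hint'.1
  obtain ⟨hu_memLp, hu_le⟩ :=
    memLp_and_setIntegral_norm_rpow_le_of_hasDerivAt_inv_smul hconj hu (by simp [h1]) hg
  set G := ∫ s in Ioc 0 1, ‖g s‖ ^ p
  have hG : 0 ≤ G := setIntegral_nonneg measurableSet_Ioc fun _ _ => by positivity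
  rw [intervalIntegral.integral_of_le zero_le_one, intervalIntegral.integral_of_le zero_le_one,
    ← hconj.symm.conjugate_eq]
  calc (∫ s in Ioc 0 1, ‖h' s‖ ^ p) ^ (1 / p)
      = (∫ s in Ioc 0 1, ‖g s + s⁻¹ • h s‖ ^ p) ^ (1 / p) := by simp only [g, sub_add_cancel]
    _ ≤ G ^ (1 / p) + (∫ s in Ioc 0 1, ‖s⁻¹ • h s‖ ^ p) ^ (1 / p) :=
        integral_norm_add_rpow_le hp.le hg hu_memLp
    _ ≤ G ^ (1 / p) + (p ^ p * G) ^ (1 / p) := by gcongr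
    _ = (p + 1) * G ^ (1 / p) := by
        rw [Real.mul_rpow (by positivity) hG, ← Real.rpow_mul hp0.le, mul_one_div_cancel hp0.ne',
          Real.rpow_one]
        ring

/-- There is a constant `B_p = q/(q-1) + 1` (with `1/p + 1/q = 1`) such that
`‖h'‖_{L^p} ≤ B_p ‖h'(·) − h(·)/s‖_{L^p}` for all `h ∈ W_0^{1,p}((0,1), ℝ^d)`. -/
theorem stmt_3 (d : ℕ) (hd : 1 ≤ d) (p q : ℝ) (hp : 1 < p) (hq : 1 < q)
    (hpq : 1 / p + 1 / q = 1)
    (h h' : ℝ → EuclideanSpace ℝ (Fin d))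
    (hderiv : ∀ s ∈ Set.Icc (0:ℝ) 1, HasDerivAt h (h' s) s)
    (h0 : h 0 = 0) (h1 : h 1 = 0)
    (hint : IntervalIntegrable (fun s => ‖h' s‖ ^ p) volume 0 1)
    (hint' : IntervalIntegrable (fun s => ‖h' s - s⁻¹ • h s‖ ^ p) volume 0 1) :
    (∫ s in (0:ℝ)..1, ‖h' s‖ ^ p) ^ (1 / p) ≤
      (q / (q - 1) + 1) * (∫ s in (0:ℝ)..1, ‖h' s - s⁻¹ • h s‖ ^ p) ^ (1 / p) :=
  stmt_3_general d p q hp hpq h h' hderiv h1 hint'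
end

section
/- If G(x) = P(x̂) + P_⊥(x̂)G(x)P_⊥(x̂) for all x ≠ 0 and G is continuous at 0, then G(0) = I (the identity matrix). -/
/-- The rank-one projection `P(x̂) = |x̂⟩⟨x̂|` as a matrix: entries `x_i x_j / |x|²`. -/
noncomputable def projMat (d : ℕ) (x : Fin d → ℝ) : Matrix (Fin d) (Fin d) ℝ :=
  Matrix.of fun i j => x i * x j / (∑ k, x k ^ 2)

/-!
Apply the decomposition to the vector `x` itself: since `P(x̂) x = x` and `P_⊥(x̂) x = 0`, it
gives `G(x) x = x`, hence `G(t x) x = x` for every `t ≠ 0`. Letting `t → 0` and using continuity,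
`G(0) x = x` for every `x`, i.e. `G(0) = I`.
-/

open Matrix

lemma sum_sq_ne_zero {ι : Type*} [Fintype ι] {x : ι → ℝ} (hx : x ≠ 0) : ∑ k, x k ^ 2 ≠ 0 := by
  intro h
  refine hx (funext fun k => ?_)
  rw [Finset.sum_eq_zero_iff_of_nonneg fun k _ => sq_nonneg (x k)] at h
  exact pow_eq_zero_iff two_ne_zero |>.mp (h k (Finset.mem_univ k))

lemma projMat_mulVec_self {d : ℕ} {x : Fin d → ℝ} (hx : x ≠ 0) : projMat d x *ᵥ x = x := by
  ext i
  simp only [mulVec, dotProduct, projMat, of_apply]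
  calc ∑ j, x i * x j / (∑ k, x k ^ 2) * x j
      = x i * (∑ j, x j ^ 2) / (∑ k, x k ^ 2) := by
        rw [Finset.mul_sum, Finset.sum_div]
        exact Finset.sum_congr rfl fun j _ => by ring
    _ = x i := mul_div_cancel_right₀ _ (sum_sq_ne_zero hx)

lemma mulVec_eq_self_of_eq_add_conj {n R : Type*} [Fintype n] [DecidableEq n] [Ring R]
    {A P : Matrix n n R} {v : n → R} (hA : A = P + (1 - P) * A * (1 - P)) (hv : P *ᵥ v = v) :
    A *ᵥ v = v := by
  have hcompl : (1 - P) *ᵥ v = 0 := by rw [sub_mulVec, one_mulVec, hv, sub_self]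
  rw [hA, add_mulVec, ← mulVec_mulVec, hcompl, mulVec_zero, add_zero, hv]

/-- If `G(x) = P(x̂) + P_⊥(x̂) G(x) P_⊥(x̂)` for all `x ≠ 0` and `G` is continuous, then
`G(0) = I`. -/
theorem stmt_10 (d : ℕ)
    (G : (Fin d → ℝ) → Matrix (Fin d) (Fin d) ℝ)
    (hGcont : ∀ i j, Continuous fun z => G z i j)
    (hdec : ∀ x : Fin d → ℝ, x ≠ 0 →
      G x = projMat d x + (1 - projMat d x) * G x * (1 - projMat d x)) :
    G 0 = 1 := by
  have hG : Continuous G := continuous_pi fun i => continuous_pi fun j => hGcont i j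
  refine ext_iff_mulVec.mpr fun x => ?_
  rw [one_mulVec]
  rcases eq_or_ne x 0 with rfl | hx
  · exact mulVec_zero _
  have hfix : ∀ t : ℝ, t ≠ 0 → G (t • x) *ᵥ x = x := fun t ht => by
    have htx : t • x ≠ 0 := smul_ne_zero ht hx
    have := mulVec_eq_self_of_eq_add_conj (hdec _ htx) (projMat_mulVec_self htx)
    rwa [mulVec_smul, smul_right_inj ht] at this
  have hline : Continuous fun t : ℝ => G (t • x) *ᵥ x :=
    (hG.comp (continuous_id.smul continuous_const)).matrix_mulVec continuous_const
  simpa using congrFun (hline.ext_on (dense_compl_singleton 0) continuous_const hfix) 0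
end

section
/- If P_⊥(G(x) + (1/2)x·∇G(x))P_⊥ ≥ c̄ P_⊥ G(x) P_⊥ holds for all x ≠ 0 with c̄ > 0, and G(x) = P + P_⊥ G(x) P_⊥ with a|y|² ≤ y·G(x)y, then necessarily c̄ ≤ 1. -/
open Filter Matrix

theorem monotoneOn_sub_mul_log {h : ℝ → ℝ} {ε : ℝ} (hdiff : Differentiable ℝ h)
    (hderiv : ∀ t, 1 < t → ε ≤ t * deriv h t) :
    MonotoneOn (fun t => h t - ε * Real.log t) (Set.Ici 1) := by
  have hlog : ∀ t ∈ Set.Ici (1 : ℝ), t ≠ 0 := fun t ht => (zero_lt_one.trans_le ht).ne'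
  apply monotoneOn_of_deriv_nonneg (convex_Ici 1)
  · exact hdiff.continuous.continuousOn.sub
      (continuousOn_const.mul (Real.continuousOn_log.mono hlog))
  · exact (hdiff.differentiableOn.sub
      ((Real.differentiableOn_log.mono hlog).const_mul ε)).mono interior_subset
  · intro t ht
    rw [interior_Ici, Set.mem_Ioi] at ht
    have ht0 : 0 < t := zero_lt_one.trans ht
    rw [deriv_fun_sub (hdiff t) ((Real.differentiableAt_log ht0.ne').const_mul ε),
      deriv_const_mul _ (Real.differentiableAt_log ht0.ne'), Real.deriv_log, sub_nonneg,
      ← div_eq_mul_inv, div_le_iff₀ ht0, mul_comm]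
    exact hderiv t ht

theorem nonpos_of_le_mul_deriv_of_le {h : ℝ → ℝ} {ε b : ℝ} (hdiff : Differentiable ℝ h)
    (hderiv : ∀ t, 1 < t → ε ≤ t * deriv h t) (hb : ∀ t, 1 ≤ t → h t ≤ b) : ε ≤ 0 := by
  by_contra! hε
  have hgrowth : ∀ t, 1 ≤ t → h 1 + ε * Real.log t ≤ h t := fun t ht => by
    have := monotoneOn_sub_mul_log hdiff hderiv (Set.mem_Ici.2 le_rfl) (Set.mem_Ici.2 ht) ht
    simp only [Real.log_one, mul_zero, sub_zero] at this
    linarith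
  have hlim : Tendsto (fun t => h 1 + ε * Real.log t) atTop atTop :=
    tendsto_atTop_add_const_left _ _ (Real.tendsto_log_atTop.const_mul_atTop hε)
  obtain ⟨t, ht1, htb⟩ := ((eventually_ge_atTop 1).and (hlim.eventually_gt_atTop b)).exists
  linarith [hgrowth t ht1, hb t ht1]

theorem le_one_of_mul_le_add_mul_deriv {h : ℝ → ℝ} {a b c : ℝ} (ha : 0 < a)
    (hdiff : Differentiable ℝ h) (hlow : ∀ t, 1 < t → a ≤ h t) (hup : ∀ t, 1 ≤ t → h t ≤ b)
    (hineq : ∀ t, 1 < t → c * h t ≤ h t + 1 / 2 * (t * deriv h t)) : c ≤ 1 := by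
  by_contra! hc
  have hderiv : ∀ t, 1 < t → 2 * (c - 1) * a ≤ t * deriv h t := fun t ht => by
    nlinarith [hlow t ht, hineq t ht]
  have := nonpos_of_le_mul_deriv_of_le hdiff hderiv hup
  nlinarith

theorem hasDerivAt_comp_smul {E : Type*} [NormedAddCommGroup E] [NormedSpace ℝ E] {f : E → ℝ}
    (hf : Differentiable ℝ f) (v : E) (t : ℝ) :
    HasDerivAt (fun s : ℝ => f (s • v)) (fderiv ℝ f (t • v) v) t :=
  (hf (t • v)).hasFDerivAt.comp_hasDerivAt t (by simpa using (hasDerivAt_id t).smul_const v)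

theorem one_sub_projMat_conj_apply_self_of_eq_zero {d : ℕ} {x : Fin d → ℝ} {j : Fin d}
    (hx : x j = 0) (M : Matrix (Fin d) (Fin d) ℝ) :
    ((1 - projMat d x) * M * (1 - projMat d x)) j j = M j j := by
  simp [mul_apply, projMat, hx, one_apply]

theorem stmt_11_general (d : ℕ) (hd : 2 ≤ d) (a b cbar : ℝ) (ha : 0 < a)
    (G : (Fin d → ℝ) → Matrix (Fin d) (Fin d) ℝ)
    (hGdiff : ∀ i j, Differentiable ℝ fun z => G z i j)
    (hell : ∀ z y : Fin d → ℝ,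
      a * ∑ i, y i ^ 2 ≤ dotProduct y ((G z).mulVec y) ∧
      dotProduct y ((G z).mulVec y) ≤ b * ∑ i, y i ^ 2)
    (hconv : ∀ z : Fin d → ℝ, z ≠ 0 → ∀ y : Fin d → ℝ,
      cbar * dotProduct y
          (((1 - projMat d z) * G z * (1 - projMat d z)).mulVec y) ≤
        dotProduct y
          (((1 - projMat d z) *
              (G z + (1 / 2 : ℝ) •
                Matrix.of fun i j => fderiv ℝ (fun w => G w i j) z z) *
              (1 - projMat d z)).mulVec y)) :
    cbar ≤ 1 := by
  let i₀ : Fin d := ⟨0, by omega⟩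
  let i₁ : Fin d := ⟨1, by omega⟩
  have hi : i₁ ≠ i₀ := by simp [i₀, i₁, Fin.ext_iff]
  let e₁ : Fin d → ℝ := Pi.single i₁ 1
  have hderiv (t : ℝ) := hasDerivAt_comp_smul (hGdiff i₁ i₁) (Pi.single i₀ 1) t
  have hnorm : ∑ i, e₁ i ^ 2 = 1 := by simp [e₁, Pi.single_apply]
  have hray (t : ℝ) : (t • Pi.single i₀ 1 : Fin d → ℝ) i₁ = 0 := by simp [hi]
  refine le_one_of_mul_le_add_mul_deriv (b := b) ha (fun t => (hderiv t).differentiableAt)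
    (fun t _ => ?_) (fun t _ => ?_) (fun t ht => ?_)
  · simpa [hnorm, e₁] using (hell (t • Pi.single i₀ 1) e₁).1
  · simpa [hnorm, e₁] using (hell (t • Pi.single i₀ 1) e₁).2
  · have hz : (t • Pi.single i₀ 1 : Fin d → ℝ) ≠ 0 := by
      simpa using (zero_lt_one.trans ht).ne'
    have := hconv _ hz e₁
    simp only [e₁, mulVec_single_one, single_one_dotProduct, col_apply,
      one_sub_projMat_conj_apply_self_of_eq_zero (hray t)] at this
    simpa [(hderiv t).deriv] using this

/-- If the convexity condition `P_⊥(G + ½ x·∇G)P_⊥ ≥ c̄ P_⊥ G P_⊥` holds for a metric of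
order zero with the radial block decomposition, then necessarily `c̄ ≤ 1`. -/
theorem stmt_11 (d : ℕ) (hd : 2 ≤ d) (a b cbar C : ℝ) (ha : 0 < a) (hb : 0 < b)
    (hcbar : 0 < cbar) (hC : 0 < C)
    (G : (Fin d → ℝ) → Matrix (Fin d) (Fin d) ℝ)
    (hGdiff : ∀ i j, Differentiable ℝ fun z => G z i j)
    (hGsymm : ∀ z, (G z).IsSymm)
    (hell : ∀ z y : Fin d → ℝ,
      a * ∑ i, y i ^ 2 ≤ dotProduct y ((G z).mulVec y) ∧
      dotProduct y ((G z).mulVec y) ≤ b * ∑ i, y i ^ 2)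
    (hdec : ∀ z : Fin d → ℝ, z ≠ 0 →
      G z = projMat d z + (1 - projMat d z) * G z * (1 - projMat d z))
    (hbd : ∀ z : Fin d → ℝ, ∀ i j, |G z i j| ≤ C ∧
      ‖fderiv ℝ (fun w => G w i j) z‖ ≤ C / (1 + ‖z‖))
    (hconv : ∀ z : Fin d → ℝ, z ≠ 0 → ∀ y : Fin d → ℝ,
      cbar * dotProduct y
          (((1 - projMat d z) * G z * (1 - projMat d z)).mulVec y) ≤
        dotProduct y
          (((1 - projMat d z) *
              (G z + (1 / 2 : ℝ) •
                Matrix.of fun i j => fderiv ℝ (fun w => G w i j) z z) *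
              (1 - projMat d z)).mulVec y)) :
    cbar ≤ 1 :=
  stmt_11_general d hd a b cbar ha G hGdiff hell hconv
end

section
/- For A = (γ'·γ̂)/|γ'|_G and B = (γ'·γ̂)/|γ'| defined along a pair (γ, γ') ∈ (ℝ^d∖{0})² with the metric G(x) = P + P_⊥GP_⊥ and a|y|² ≤ yGy ≤ b|y|², the inequalities b(1−B²) ≥ 1−A² and a^{-1}(1−A²) ≥ 1−B² hold. -/
/-- `A = (γ'·γ̂)/|γ'|_G` where `|γ'|_G = √(γ'·G(γ)γ')`. -/
noncomputable def AObs (d : ℕ) (G : (Fin d → ℝ) → Matrix (Fin d) (Fin d) ℝ)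
    (γ γ' : Fin d → ℝ) : ℝ :=
  (∑ i, γ' i * γ i) /
    (Real.sqrt (∑ i, γ i ^ 2) * Real.sqrt (dotProduct γ' ((G γ).mulVec γ')))

/-- `B = (γ'·γ̂)/|γ'|`. -/
noncomputable def BObs (d : ℕ) (γ γ' : Fin d → ℝ) : ℝ :=
  (∑ i, γ' i * γ i) / (Real.sqrt (∑ i, γ i ^ 2) * Real.sqrt (∑ i, γ' i ^ 2))

open Matrix

/-- `t ↦ t / (u + t)` is monotone and `u + y ≤ u + k y`, so passing from `x` to `k y` and then
shrinking the denominator to `u + y` costs at most the factor `k`. -/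
theorem div_add_le_mul_div_add {u x y k : ℝ} (hu : 0 ≤ u) (hx : 0 ≤ x) (hk : 1 ≤ k)
    (hxy : x ≤ k * y) : x / (u + x) ≤ k * (y / (u + y)) := by
  have hy : 0 ≤ y := nonneg_of_mul_nonneg_right (hx.trans hxy) (by linarith)
  rcases hu.eq_or_lt with rfl | hu
  · rcases hx.eq_or_lt with rfl | hx
    · simp only [zero_add, div_zero]; positivity
    · rw [zero_add, zero_add, div_self hx.ne', div_self (by nlinarith)]; simpa using hk
  rw [← mul_div_assoc, div_le_div_iff₀ (by positivity) (by positivity)]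
  nlinarith [mul_nonneg (sub_nonneg.mpr hxy) hu.le,
    mul_nonneg (sub_nonneg.mpr hk) (mul_nonneg hx hy)]

theorem sum_sq_eq_dotProduct_self {ι : Type*} [Fintype ι] (x : ι → ℝ) :
    ∑ i, x i ^ 2 = x ⬝ᵥ x := by
  simp only [dotProduct, sq]

theorem dotProduct_self_nonneg {ι : Type*} [Fintype ι] (x : ι → ℝ) : 0 ≤ x ⬝ᵥ x :=
  Finset.sum_nonneg fun i _ => mul_self_nonneg (x i)

theorem dotProduct_self_pos {ι : Type*} [Fintype ι] {x : ι → ℝ} (hx : x ≠ 0) : 0 < x ⬝ᵥ x :=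
  (dotProduct_self_nonneg x).lt_of_ne (Ne.symm (dotProduct_self_eq_zero.not.mpr hx))

theorem one_sub_sq_div_sqrt_mul_sqrt {S c R : ℝ} (hS : 0 < S) (hQ : 0 < c ^ 2 / S + R) :
    1 - (c / (√S * √(c ^ 2 / S + R))) ^ 2 = R / (c ^ 2 / S + R) := by
  rw [div_pow, mul_pow, Real.sq_sqrt hS.le, Real.sq_sqrt hQ.le, eq_div_iff hQ.ne', sub_mul,
    div_mul_eq_div_div, div_mul_cancel₀ _ hQ.ne']
  ring

namespace projMat

variable {d : ℕ} (x y : Fin d → ℝ)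

theorem transpose : (projMat d x)ᵀ = projMat d x := by
  ext i j
  simp only [projMat, Matrix.transpose_apply, Matrix.of_apply]
  ring

theorem mulVec : projMat d x *ᵥ y = ((y ⬝ᵥ x) / (x ⬝ᵥ x)) • x := by
  ext i
  simp only [projMat, Matrix.mulVec, dotProduct, Matrix.of_apply, Pi.smul_apply, smul_eq_mul,
    sum_sq_eq_dotProduct_self, Finset.sum_div, Finset.sum_mul]
  refine Finset.sum_congr rfl fun j _ => ?_
  ring

theorem dotProduct_mulVec : y ⬝ᵥ projMat d x *ᵥ y = (y ⬝ᵥ x) ^ 2 / (x ⬝ᵥ x) := by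
  rw [mulVec, dotProduct_smul, smul_eq_mul]
  ring

/-- Pythagoras for the orthogonal decomposition `y = P y + (1 - P) y`. -/
theorem dotProduct_self_sub_mulVec :
    (y - projMat d x *ᵥ y) ⬝ᵥ (y - projMat d x *ᵥ y) = y ⬝ᵥ y - (y ⬝ᵥ x) ^ 2 / (x ⬝ᵥ x) := by
  rcases eq_or_ne (x ⬝ᵥ x) 0 with hS | hS
  · simp [mulVec, hS]
  rw [mulVec]
  simp only [sub_dotProduct, dotProduct_sub, smul_dotProduct, dotProduct_smul, smul_eq_mul,
    dotProduct_comm x y]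
  field_simp
  ring

theorem dotProduct_mulVec_of_eq_add {M : Matrix (Fin d) (Fin d) ℝ}
    (hM : M = projMat d x + (1 - projMat d x) * M * (1 - projMat d x)) :
    y ⬝ᵥ M *ᵥ y = (y ⬝ᵥ x) ^ 2 / (x ⬝ᵥ x) +
      (y - projMat d x *ᵥ y) ⬝ᵥ M *ᵥ (y - projMat d x *ᵥ y) := by
  have hproj : (1 - projMat d x) *ᵥ y = y - projMat d x *ᵥ y := by
    rw [Matrix.sub_mulVec, Matrix.one_mulVec]
  conv_lhs => rw [hM]
  rw [Matrix.add_mulVec, dotProduct_add, dotProduct_mulVec, ← Matrix.mulVec_mulVec,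
    ← Matrix.mulVec_mulVec, Matrix.dotProduct_mulVec, ← Matrix.mulVec_transpose,
    Matrix.transpose_sub, Matrix.transpose_one, transpose, hproj]

end projMat

theorem stmt_15_general (d : ℕ) (a b : ℝ) (ha : 0 < a) (ha1 : a ≤ 1) (hb : 1 ≤ b)
    (G : (Fin d → ℝ) → Matrix (Fin d) (Fin d) ℝ)
    (hell : ∀ z y : Fin d → ℝ,
      a * ∑ i, y i ^ 2 ≤ dotProduct y ((G z).mulVec y) ∧
      dotProduct y ((G z).mulVec y) ≤ b * ∑ i, y i ^ 2)
    (hdec : ∀ z : Fin d → ℝ, z ≠ 0 →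
      G z = projMat d z + (1 - projMat d z) * G z * (1 - projMat d z))
    (γ γ' : Fin d → ℝ) (hγ : γ ≠ 0) (hγ' : γ' ≠ 0) :
    1 - (AObs d G γ γ') ^ 2 ≤ b * (1 - (BObs d γ γ') ^ 2) ∧
    1 - (BObs d γ γ') ^ 2 ≤ a⁻¹ * (1 - (AObs d G γ γ') ^ 2) := by
  simp only [sum_sq_eq_dotProduct_self] at hell
  set w := γ' - projMat d γ *ᵥ γ'
  set u := (γ' ⬝ᵥ γ) ^ 2 / (γ ⬝ᵥ γ)
  have hS : 0 < γ ⬝ᵥ γ := dotProduct_self_pos hγ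
  have hT : γ' ⬝ᵥ γ' = u + w ⬝ᵥ w := by rw [projMat.dotProduct_self_sub_mulVec]; ring
  have hQ : γ' ⬝ᵥ G γ *ᵥ γ' = u + w ⬝ᵥ G γ *ᵥ w :=
    projMat.dotProduct_mulVec_of_eq_add γ γ' (hdec γ hγ)
  have hTpos : 0 < u + w ⬝ᵥ w := hT ▸ dotProduct_self_pos hγ'
  have hQpos : 0 < u + w ⬝ᵥ G γ *ᵥ w :=
    hQ ▸ (mul_pos ha (dotProduct_self_pos hγ')).trans_le (hell γ γ').1
  have hA : 1 - AObs d G γ γ' ^ 2 = w ⬝ᵥ G γ *ᵥ w / (u + w ⬝ᵥ G γ *ᵥ w) := by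
    rw [AObs, sum_sq_eq_dotProduct_self, hQ]
    exact one_sub_sq_div_sqrt_mul_sqrt hS hQpos
  have hB : 1 - BObs d γ γ' ^ 2 = w ⬝ᵥ w / (u + w ⬝ᵥ w) := by
    rw [BObs, sum_sq_eq_dotProduct_self, sum_sq_eq_dotProduct_self, hT]
    exact one_sub_sq_div_sqrt_mul_sqrt hS hTpos
  have hu : 0 ≤ u := by positivity
  have hww : 0 ≤ w ⬝ᵥ w := dotProduct_self_nonneg w
  rw [hA, hB]
  exact ⟨div_add_le_mul_div_add hu ((mul_nonneg ha.le hww).trans (hell γ w).1) hb (hell γ w).2,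
    div_add_le_mul_div_add hu hww ((one_le_inv₀ ha).mpr ha1)
      ((le_inv_mul_iff₀ ha).mpr (hell γ w).1)⟩

/-- For the observables `A` and `B`: `b(1−B²) ≥ 1−A²` and `a⁻¹(1−A²) ≥ 1−B²`. -/
theorem stmt_15 (d : ℕ) (hd : 2 ≤ d) (a b : ℝ) (ha : 0 < a) (ha1 : a ≤ 1) (hb : 1 ≤ b)
    (G : (Fin d → ℝ) → Matrix (Fin d) (Fin d) ℝ)
    (hGsymm : ∀ z, (G z).IsSymm)
    (hell : ∀ z y : Fin d → ℝ,
      a * ∑ i, y i ^ 2 ≤ dotProduct y ((G z).mulVec y) ∧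
      dotProduct y ((G z).mulVec y) ≤ b * ∑ i, y i ^ 2)
    (hdec : ∀ z : Fin d → ℝ, z ≠ 0 →
      G z = projMat d z + (1 - projMat d z) * G z * (1 - projMat d z))
    (γ γ' : Fin d → ℝ) (hγ : γ ≠ 0) (hγ' : γ' ≠ 0) :
    1 - (AObs d G γ γ') ^ 2 ≤ b * (1 - (BObs d γ γ') ^ 2) ∧
    1 - (BObs d γ γ') ^ 2 ≤ a⁻¹ * (1 - (AObs d G γ γ') ^ 2) :=
  stmt_15_general d a b ha ha1 hb G hell hdec γ γ' hγ hγ'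
end

section
/- Let A be a differentiable function on an interval [0,T) with A(0⁺) → 1 (i.e. lim_{s→0⁺} A(s) = 1), A(s)² ≤ 1, and suppose A satisfies the differential inequality A'(s) ≥ m(s)(1 − A(s)² − εK) where m(s) > 0 and εK < 1. Then for any C̄ > K/2 with 2C̄ − K > εC̄², one has A(s) ≥ 1 − εC̄ for all s ∈ (0,T). -/
/-!
Since `A(0⁺) = 1 > 1 - εC̄`, the function starts above the level `b = 1 - εC̄`. The conditions on
`C̄` say exactly that `b² < 1 - εK`, so at any point where `A = b` the differential inequality gives
`A' ≥ m (1 - b² - εK) > 0`. A function whose derivative is positive whenever it sits at level `b`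
can never cross `b` downwards.
-/

open MeasureTheory Set

theorem le_image_of_deriv_right_pos_of_eq {f f' : ℝ → ℝ} {a b v : ℝ}
    (hf : ContinuousOn f (Icc a b)) (hf' : ∀ x ∈ Ico a b, HasDerivWithinAt f (f' x) (Ici x) x)
    (ha : v ≤ f a) (hpos : ∀ x ∈ Ico a b, f x = v → 0 < f' x) :
    ∀ ⦃x⦄, x ∈ Icc a b → v ≤ f x := by
  intro x hx
  have key := image_le_of_deriv_right_lt_deriv_boundary (f := fun y => -f y) (f' := fun y => -f' y)
    (B := fun _ => -v) (B' := fun _ => 0) hf.neg (fun y hy => (hf' y hy).neg) (neg_le_neg ha)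
    (fun _ => hasDerivAt_const _ _)
    (fun y hy hyv => neg_neg_of_pos (hpos y hy (neg_inj.mp hyv))) hx
  exact neg_le_neg_iff.mp key

theorem one_sub_mul_sq_lt_one_sub_mul {ε K C : ℝ} (hε : 0 < ε) (hC : ε * C ^ 2 < 2 * C - K) :
    (1 - ε * C) ^ 2 < 1 - ε * K := by
  nlinarith [mul_lt_mul_of_pos_left hC hε]

theorem stmt_18_general (T : EReal) (ε K : ℝ) (hε : 0 < ε) (hK : 0 < K)
    (m A A' : ℝ → ℝ)
    (hm : ∀ s : ℝ, 0 < s → (s : EReal) < T → 0 < m s)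
    (hAd : ∀ s : ℝ, 0 < s → (s : EReal) < T → HasDerivAt A (A' s) s)
    (hineq : ∀ s : ℝ, 0 < s → (s : EReal) < T →
      m s * (1 - A s ^ 2 - ε * K) ≤ A' s)
    (hlim : Filter.Tendsto A (nhdsWithin 0 (Set.Ioi 0)) (nhds 1)) :
    ∀ Cb : ℝ, K / 2 < Cb → ε * Cb ^ 2 < 2 * Cb - K →
      ∀ s : ℝ, 0 < s → (s : EReal) < T → 1 - ε * Cb ≤ A s := by
  intro Cb hCbK hCb s₀ hs₀ hs₀T
  have hb_lt_one : 1 - ε * Cb < 1 := by nlinarith [mul_pos hε (show 0 < Cb by linarith)]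
  have hb_sq := one_sub_mul_sq_lt_one_sub_mul hε hCb
  obtain ⟨a, hAa, ha₀, has₀⟩ : ∃ a, 1 - ε * Cb < A a ∧ a ∈ Ioo 0 s₀ :=
    ((hlim.eventually (eventually_gt_nhds hb_lt_one)).and
      (Ioo_mem_nhdsGT_of_mem (left_mem_Ico.mpr hs₀))).exists
  have hdom : ∀ x ∈ Icc a s₀, 0 < x ∧ (x : EReal) < T := fun x hx =>
    ⟨ha₀.trans_le hx.1, (EReal.coe_le_coe_iff.mpr hx.2).trans_lt hs₀T⟩
  refine le_image_of_deriv_right_pos_of_eq (f' := A')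
    (fun x hx => (hAd x (hdom x hx).1 (hdom x hx).2).continuousAt.continuousWithinAt)
    (fun x hx => (hAd x (hdom x (Ico_subset_Icc_self hx)).1
      (hdom x (Ico_subset_Icc_self hx)).2).hasDerivWithinAt)
    hAa.le ?_ (right_mem_Icc.mpr has₀.le)
  intro x hx hAx
  obtain ⟨hx₀, hxT⟩ := hdom x (Ico_subset_Icc_self hx)
  refine (mul_pos (hm x hx₀ hxT) ?_).trans_le (hineq x hx₀ hxT)
  rw [hAx]
  linarith

/-- Differential-inequality comparison: if `A' ≥ m(s)(1 − A² − εK)` on `(0,T)` with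
`A(0⁺) = 1`, `A² ≤ 1`, `m > 0` locally integrable and non-integrable at `0`, then for any
`C̄ > K/2` with `2C̄ − K > εC̄²` one has `A(s) ≥ 1 − εC̄` on `(0,T)`. -/
theorem stmt_18 (T : EReal) (hT : 0 < T) (ε K : ℝ) (hε : 0 < ε) (hK : 0 < K)
    (hεK : ε * K < 1) (m A A' : ℝ → ℝ)
    (hm : ∀ s : ℝ, 0 < s → (s : EReal) < T → 0 < m s)
    (hmint : ∀ s₁ s₂ : ℝ, 0 < s₁ → s₁ ≤ s₂ → (s₂ : EReal) < T →
      IntervalIntegrable m volume s₁ s₂)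
    (hmdiv : ∀ δ : ℝ, 0 < δ → (δ : EReal) ≤ T →
      ∫⁻ s in Set.Ioo (0:ℝ) δ, ENNReal.ofReal (m s) = ⊤)
    (hA : ∀ s : ℝ, 0 < s → (s : EReal) < T → A s ∈ Set.Icc (-1 : ℝ) 1)
    (hAd : ∀ s : ℝ, 0 < s → (s : EReal) < T → HasDerivAt A (A' s) s)
    (hineq : ∀ s : ℝ, 0 < s → (s : EReal) < T →
      m s * (1 - A s ^ 2 - ε * K) ≤ A' s)
    (hlim : Filter.Tendsto A (nhdsWithin 0 (Set.Ioi 0)) (nhds 1)) :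
    ∀ Cb : ℝ, K / 2 < Cb → ε * Cb ^ 2 < 2 * Cb - K →
      ∀ s : ℝ, 0 < s → (s : EReal) < T → 1 - ε * Cb ≤ A s :=
  stmt_18_general T ε K hε hK m A A' hm hAd hineq hlim
end
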